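/- arXiv:2111.01290 — 10 statements merged into one kernel-verified Lean document; each statement's English description precedes it below -/
import Mathlib

section
/- Let g, h : ℝⁿ → ℝ be strongly convex with modulus σ > 0, let x ∈ ℝⁿ, w ∈ ∂h(x), and let y ∈ ℝⁿ satisfy w ∈ ∂g(y) (equivalently, y is the unique minimizer of z ↦ g(z) − ⟨w, z − x⟩). Then φ(y) ≤ φ(x) − σ ‖y − x‖², where φ = g − h. -/
open Set Filter Topology

noncomputable section

/-- The (convex-analysis) subdifferential of `f` at `x`:
the set of `w` with `f z ≥ f x + ⟨w, z - x⟩` for all `z`. -/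
def subdiff {n : ℕ} (f : EuclideanSpace ℝ (Fin n) → ℝ) (x : EuclideanSpace ℝ (Fin n)) :
    Set (EuclideanSpace ℝ (Fin n)) :=
  {w | ∀ z, f x + (inner ℝ w (z - x) : ℝ) ≤ f z}

/-- `f` is strongly convex with modulus `σ`. -/
def StrongConvexWith {n : ℕ} (σ : ℝ) (f : EuclideanSpace ℝ (Fin n) → ℝ) : Prop :=
  ∀ x y : EuclideanSpace ℝ (Fin n), ∀ t : ℝ, 0 < t → t < 1 →
    f (t • x + (1 - t) • y) ≤ t * f x + (1 - t) * f y - σ / 2 * (t * (1 - t) * ‖x - y‖ ^ 2)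

/-! A subgradient `w` of a `σ`-strongly convex `f` at `y` gives the quadratic minorant
`f z ≥ f y + ⟨w, z - y⟩ + σ/2 ‖z - y‖²`: compare the subgradient inequality at
`y + t (z - y)` with strong convexity on the chord, divide by `t` and let `t → 0`. Applying it
to `g` at `y` (tested at `x`) and to `h` at `x` (tested at `y`) and adding, the two linear
terms cancel and the two quadratic terms add up to `σ ‖y - x‖²`. -/

lemma le_of_forall_le_add_mul {a b c : ℝ} (h : ∀ t : ℝ, 0 < t → t < 1 → a ≤ b + c * t) :
    a ≤ b := by
  have hlim : Tendsto (fun t : ℝ => b + c * t) (𝓝 0) (𝓝 (b + c * 0)) :=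
    tendsto_const_nhds.add (tendsto_id.const_mul c)
  rw [mul_zero, add_zero] at hlim
  refine ge_of_tendsto (hlim.mono_left (nhdsWithin_le_nhds (s := Ioi 0))) ?_
  filter_upwards [Ioo_mem_nhdsGT (zero_lt_one' ℝ)] with t ht using h t ht.1 ht.2

lemma StrongConvexWith.add_inner_add_sq_le_of_mem_subdiff {n : ℕ} {σ : ℝ}
    {f : EuclideanSpace ℝ (Fin n) → ℝ} (hf : StrongConvexWith σ f)
    {y w : EuclideanSpace ℝ (Fin n)} (hw : w ∈ subdiff f y) (z : EuclideanSpace ℝ (Fin n)) :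
    f y + inner ℝ w (z - y) + σ / 2 * ‖z - y‖ ^ 2 ≤ f z := by
  suffices ∀ t : ℝ, 0 < t → t < 1 →
      inner ℝ w (z - y) ≤ (f z - f y - σ / 2 * ‖z - y‖ ^ 2) + σ / 2 * ‖z - y‖ ^ 2 * t by
    linarith [le_of_forall_le_add_mul this]
  intro t ht0 ht1
  have hstep : t • z + (1 - t) • y - y = t • (z - y) := by
    rw [sub_smul, one_smul, smul_sub]; abel
  have hchord := (hw (t • z + (1 - t) • y)).trans (hf z y t ht0 ht1)
  rw [hstep, inner_smul_right] at hchord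
  -- `hchord` is `t` times the claim
  nlinarith

theorem stmt1_general {n : ℕ} (g h : EuclideanSpace ℝ (Fin n) → ℝ) (σ : ℝ)
    (hgs : StrongConvexWith σ g) (hhs : StrongConvexWith σ h)
    (x y w : EuclideanSpace ℝ (Fin n))
    (hwx : w ∈ subdiff h x) (hwy : w ∈ subdiff g y) :
    g y - h y ≤ (g x - h x) - σ * ‖y - x‖ ^ 2 := by
  have hg := hgs.add_inner_add_sq_le_of_mem_subdiff hwy x
  have hh := hhs.add_inner_add_sq_le_of_mem_subdiff hwx y
  have hcancel : inner ℝ w (x - y) = -inner ℝ w (y - x) := by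
    rw [← inner_neg_right, neg_sub]
  rw [hcancel, norm_sub_rev] at hg
  linarith

theorem stmt1 {n : ℕ} (g h : EuclideanSpace ℝ (Fin n) → ℝ) (σ : ℝ) (hσ : 0 < σ)
    (hgs : StrongConvexWith σ g) (hhs : StrongConvexWith σ h)
    (x y w : EuclideanSpace ℝ (Fin n))
    (hwx : w ∈ subdiff h x) (hwy : w ∈ subdiff g y) :
    g y - h y ≤ (g x - h x) - σ * ‖y - x‖ ^ 2 :=
  stmt1_general g h σ hgs hhs x y w hwx hwy
end
end

section
/- Let g, h : ℝⁿ → ℝ be strongly convex with modulus σ > 0, let x, y ∈ ℝⁿ, set d := y − x, and let w ∈ ∂h(x) ∩ ∂g(y). Then for every λ ∈ (0, 1], φ(y + λ d) − φ(y) ≤ −(3σ/2) λ ‖d‖² + λ ( g(y + d) + g(x) − 2 g(y) ), where φ = g − h. -/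
open Set Filter Topology

noncomputable section

/-!
With `d = y - x` and `z = y + λ d`, strong convexity of `g` on the segment `[y, y + d]` bounds
`g z - g y`, and since `y` lies on the segment `[x, z]`, strong convexity of `h` there bounds
`h y - h z`; together they cost `σ λ ‖d‖²`. The common subgradient `w` links `h x - h y` to
`g x - g y`: each subgradient inequality, sharpened by strong convexity, gains `σ/4 ‖d‖²`, and
the two inner products `⟨w, ±d⟩` cancel.
-/

namespace StrongConvexWith

variable {n : ℕ} {σ : ℝ} {f : EuclideanSpace ℝ (Fin n) → ℝ}

theorem apply_add_smul_sub_le (hf : StrongConvexWith σ f) (x y : EuclideanSpace ℝ (Fin n))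
    {t : ℝ} (ht : t ∈ Icc (0 : ℝ) 1) :
    f (y + t • (x - y)) ≤ t * f x + (1 - t) * f y - σ / 2 * (t * (1 - t) * ‖x - y‖ ^ 2) := by
  obtain ⟨ht0, ht1⟩ := ht
  rcases ht0.eq_or_lt with rfl | ht0
  · simp
  rcases ht1.eq_or_lt with rfl | ht1
  · simp
  convert hf x y t ht0 ht1 using 2
  module

/-- Apply the subgradient inequality at the midpoint of `[x, z]` and strong convexity there. -/
theorem add_inner_add_le_of_mem_subdiff (hf : StrongConvexWith σ f)
    {x w : EuclideanSpace ℝ (Fin n)} (hw : w ∈ subdiff f x) (z : EuclideanSpace ℝ (Fin n)) :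
    f x + inner ℝ w (z - x) + σ / 4 * ‖z - x‖ ^ 2 ≤ f z := by
  have hmid := hf.apply_add_smul_sub_le z x (t := 1 / 2) ⟨by norm_num, by norm_num⟩
  have hsub := hw (x + (1 / 2 : ℝ) • (z - x))
  rw [add_sub_cancel_left, real_inner_smul_right] at hsub
  linarith

/-- `y` lies on the segment from `x` to the extrapolated point `y + λ (y - x)`, at parameter
`1 / (1 + λ)`. -/
theorem add_one_mul_le_extrapolate (hf : StrongConvexWith σ f) (x y : EuclideanSpace ℝ (Fin n))
    {lam : ℝ} (hlam : 0 ≤ lam) :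
    (1 + lam) * f y ≤
      f (y + lam • (y - x)) + lam * f x - σ / 2 * (lam * (1 + lam) * ‖y - x‖ ^ 2) := by
  have hpos : (0 : ℝ) < 1 + lam := by linarith
  have hseg := hf.apply_add_smul_sub_le (y + lam • (y - x)) x (t := 1 / (1 + lam))
    ⟨by positivity, (div_le_one hpos).2 (by linarith)⟩
  have hzx : y + lam • (y - x) - x = (1 + lam) • (y - x) := by module
  rw [hzx, smul_smul, one_div_mul_cancel hpos.ne', one_smul, add_sub_cancel, norm_smul,
    Real.norm_of_nonneg hpos.le] at hseg
  have hscaled := mul_le_mul_of_nonneg_left hseg hpos.le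
  have hrhs : (1 + lam) * (1 / (1 + lam) * f (y + lam • (y - x)) + (1 - 1 / (1 + lam)) * f x -
      σ / 2 * (1 / (1 + lam) * (1 - 1 / (1 + lam)) * ((1 + lam) * ‖y - x‖) ^ 2)) =
      f (y + lam • (y - x)) + lam * f x - σ / 2 * (lam * (1 + lam) * ‖y - x‖ ^ 2) := by
    field_simp
    ring
  linarith

end StrongConvexWith

theorem sub_add_le_sub_of_mem_subdiff_inter {n : ℕ} {σ : ℝ}
    {g h : EuclideanSpace ℝ (Fin n) → ℝ} (hgs : StrongConvexWith σ g)
    (hhs : StrongConvexWith σ h) {x y w : EuclideanSpace ℝ (Fin n)}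
    (hw : w ∈ subdiff h x ∩ subdiff g y) :
    h x - h y + σ / 2 * ‖y - x‖ ^ 2 ≤ g x - g y := by
  have hh := hhs.add_inner_add_le_of_mem_subdiff hw.1 y
  have hg := hgs.add_inner_add_le_of_mem_subdiff hw.2 x
  rw [← neg_sub y x, inner_neg_right, norm_neg] at hg
  linarith

theorem stmt3_general {n : ℕ} (g h : EuclideanSpace ℝ (Fin n) → ℝ) (σ : ℝ)
    (hgs : StrongConvexWith σ g) (hhs : StrongConvexWith σ h)
    (x y w : EuclideanSpace ℝ (Fin n))
    (hw : w ∈ subdiff h x ∩ subdiff g y) :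
    ∀ lam : ℝ, 0 < lam → lam ≤ 1 →
      (g (y + lam • (y - x)) - h (y + lam • (y - x))) - (g y - h y) ≤
        -(3 * σ / 2) * lam * ‖y - x‖ ^ 2 + lam * (g (y + (y - x)) + g x - 2 * g y) := by
  intro lam hlam0 hlam1
  have hg := hgs.apply_add_smul_sub_le (y + (y - x)) y ⟨hlam0.le, hlam1⟩
  rw [add_sub_cancel_left] at hg
  have hh := hhs.add_one_mul_le_extrapolate x y hlam0.le
  have hgap := mul_le_mul_of_nonneg_left
    (sub_add_le_sub_of_mem_subdiff_inter hgs hhs hw) hlam0.le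
  linarith

theorem stmt3 {n : ℕ} (g h : EuclideanSpace ℝ (Fin n) → ℝ) (σ : ℝ) (hσ : 0 < σ)
    (hgs : StrongConvexWith σ g) (hhs : StrongConvexWith σ h)
    (x y w : EuclideanSpace ℝ (Fin n))
    (hw : w ∈ subdiff h x ∩ subdiff g y) :
    ∀ lam : ℝ, 0 < lam → lam ≤ 1 →
      (g (y + lam • (y - x)) - h (y + lam • (y - x))) - (g y - h y) ≤
        -(3 * σ / 2) * lam * ‖y - x‖ ^ 2 + lam * (g (y + (y - x)) + g x - 2 * g y) :=
  stmt3_general g h σ hgs hhs x y w hw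
end
end

section
/- Let g, h : ℝⁿ → ℝ be strongly convex with modulus σ > 0, let ρ > 0 and ν > 0, let x, y ∈ ℝⁿ with d := y − x ≠ 0, and let w ∈ ∂h(x) ∩ ∂g(y). Then δ̂ := ν / ( g(y + d) + g(x) − 2 g(y) ) > 0, and for δ := min{ δ̂, 1, 3σ/(2ρ) } one has φ(y + λ d) ≤ φ(y) − ρ λ² ‖d‖² + ν for every λ ∈ (0, δ], where φ = g − h. Consequently the non-monotone line search of nmBDCA is well-defined. -/
open Set Filter Topology

/-!
With `d = y - x`, strong convexity of `g` on `[y, y + d]` and the subgradient inequality for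
`w ∈ ∂g(y)` give `φ (y + λ d) ≤ φ y + λ D - (3σ/2) λ ‖d‖²`, where `D = g (y + d) + g x - 2 g y`,
once `h (y + λ d) - h y` is bounded below via `w ∈ ∂h(x)`. Strong convexity at the midpoint `y`
of `[x, y + d]` gives `D ≥ σ ‖d‖² > 0`, and the three constraints on `λ` turn `λ D` into `ν` and
`(3σ/2) λ ‖d‖²` into `ρ λ² ‖d‖²`.
-/

noncomputable section

namespace StrongConvexWith

variable {n : ℕ} {σ : ℝ} {f : EuclideanSpace ℝ (Fin n) → ℝ}

lemma le_segment (hf : StrongConvexWith σ f) (p d : EuclideanSpace ℝ (Fin n)) {θ : ℝ}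
    (h0 : 0 ≤ θ) (h1 : θ ≤ 1) :
    f (p + θ • d) ≤ (1 - θ) * f p + θ * f (p + d) - σ / 2 * (θ * (1 - θ) * ‖d‖ ^ 2) := by
  rcases h0.eq_or_lt with rfl | h0
  · simp
  rcases h1.eq_or_lt with rfl | h1
  · simp
  have h := hf (p + d) p θ h0 h1
  rw [show θ • (p + d) + (1 - θ) • p = p + θ • d by module, add_sub_cancel_left] at h
  linarith

lemma add_inner_add_le (hf : StrongConvexWith σ f) {p w : EuclideanSpace ℝ (Fin n)}
    (hw : w ∈ subdiff f p) (d : EuclideanSpace ℝ (Fin n)) :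
    f p + inner ℝ w d + σ / 2 * ‖d‖ ^ 2 ≤ f (p + d) := by
  -- divide the two bounds on `f (p + θ d)` by `θ` and let `θ → 0⁺`
  have hbound : ∀ θ ∈ Ioo (0 : ℝ) 1,
      f p + inner ℝ w d + σ / 2 * ‖d‖ ^ 2 - f (p + d) ≤ σ / 2 * ‖d‖ ^ 2 * θ := by
    rintro θ ⟨h0, h1⟩
    have hsub := hw (p + θ • d)
    rw [add_sub_cancel_left, real_inner_smul_right] at hsub
    have hseg := hf.le_segment p d h0.le h1.le
    refine le_of_mul_le_mul_left ?_ h0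
    linear_combination hsub + hseg
  have hlim : Tendsto (fun θ : ℝ => σ / 2 * ‖d‖ ^ 2 * θ) (𝓝[>] 0) (𝓝 0) := by
    have := ((continuous_const_mul (σ / 2 * ‖d‖ ^ 2)).tendsto 0).mono_left
      (nhdsWithin_le_nhds (s := Ioi 0))
    rwa [mul_zero] at this
  have := ge_of_tendsto hlim (eventually_of_mem (Ioo_mem_nhdsGT one_pos) hbound)
  linarith

/-- `s ↦ f (x + s d) - s ⟪w, d⟫ - (σ/2) s² ‖d‖²` is convex with minimum at `0`, hence
nondecreasing on `[0, ∞)`. -/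
lemma inner_add_le_sub_of_mem_subdiff (hf : StrongConvexWith σ f) {x w : EuclideanSpace ℝ (Fin n)}
    (hw : w ∈ subdiff f x) (d : EuclideanSpace ℝ (Fin n)) {s t : ℝ} (hs : 0 ≤ s) (hst : s ≤ t) :
    (t - s) * inner ℝ w d + σ / 2 * (t ^ 2 - s ^ 2) * ‖d‖ ^ 2 ≤
      f (x + t • d) - f (x + s • d) := by
  rcases (hs.trans hst).eq_or_lt with ht | ht
  · obtain rfl : s = 0 := by linarith
    subst ht
    simp
  have hsub := hf.add_inner_add_le hw (t • d)
  obtain ⟨θ, hθ0, hθ1, rfl⟩ : ∃ θ, 0 ≤ θ ∧ θ ≤ 1 ∧ θ * t = s :=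
    ⟨s / t, by positivity, div_le_one_of_le₀ hst ht.le, div_mul_cancel₀ s ht.ne'⟩
  have hseg := hf.le_segment x (t • d) hθ0 hθ1
  have hnorm : ‖t • d‖ ^ 2 = t ^ 2 * ‖d‖ ^ 2 := by rw [norm_smul, mul_pow, Real.norm_eq_abs, sq_abs]
  rw [smul_smul, hnorm] at hseg
  rw [real_inner_smul_right, hnorm] at hsub
  linear_combination hseg + (1 - θ) * hsub

lemma mul_norm_sq_le_second_diff (hf : StrongConvexWith σ f) (x y : EuclideanSpace ℝ (Fin n)) :
    σ * ‖y - x‖ ^ 2 ≤ f (y + (y - x)) + f x - 2 * f y := by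
  have h := hf.le_segment x ((2 : ℝ) • (y - x)) (θ := 1 / 2) (by norm_num) (by norm_num)
  rw [show x + (1 / 2 : ℝ) • (2 : ℝ) • (y - x) = y by module,
    show x + (2 : ℝ) • (y - x) = y + (y - x) by module, norm_smul] at h
  norm_num at h
  linarith

end StrongConvexWith

lemma dc_descent_le {n : ℕ} {σ : ℝ} {g h : EuclideanSpace ℝ (Fin n) → ℝ}
    (hgs : StrongConvexWith σ g) (hhs : StrongConvexWith σ h) {x y w : EuclideanSpace ℝ (Fin n)}
    (hw : w ∈ subdiff h x ∩ subdiff g y) {lam : ℝ} (hl0 : 0 ≤ lam) (hl1 : lam ≤ 1) :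
    g (y + lam • (y - x)) - h (y + lam • (y - x)) ≤
      (g y - h y) + lam * (g (y + (y - x)) + g x - 2 * g y) - 3 * σ / 2 * lam * ‖y - x‖ ^ 2 := by
  have hg := hgs.le_segment y (y - x) hl0 hl1
  have hh := hhs.inner_add_le_sub_of_mem_subdiff hw.1 (y - x) zero_le_one
    (by linarith : (1 : ℝ) ≤ 1 + lam)
  rw [show x + (1 + lam) • (y - x) = y + lam • (y - x) by module,
    show x + (1 : ℝ) • (y - x) = y by module] at hh
  have hgy := hw.2 x
  rw [show x - y = -(y - x) by module, inner_neg_right] at hgy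
  linear_combination hg + hh + lam * hgy

theorem stmt4 {n : ℕ} (g h : EuclideanSpace ℝ (Fin n) → ℝ) (σ ρ ν : ℝ)
    (hσ : 0 < σ) (hρ : 0 < ρ) (hν : 0 < ν)
    (hgs : StrongConvexWith σ g) (hhs : StrongConvexWith σ h)
    (x y w : EuclideanSpace ℝ (Fin n)) (hd : y - x ≠ 0)
    (hw : w ∈ subdiff h x ∩ subdiff g y) :
    0 < ν / (g (y + (y - x)) + g x - 2 * g y) ∧
      ∀ lam : ℝ, 0 < lam →
        lam ≤ min (min (ν / (g (y + (y - x)) + g x - 2 * g y)) 1) (3 * σ / (2 * ρ)) →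
        g (y + lam • (y - x)) - h (y + lam • (y - x)) ≤
          (g y - h y) - ρ * lam ^ 2 * ‖y - x‖ ^ 2 + ν := by
  have hr : 0 < ‖y - x‖ ^ 2 := pow_pos (norm_pos_iff.2 hd) 2
  have hD : 0 < g (y + (y - x)) + g x - 2 * g y :=
    (mul_pos hσ hr).trans_le (hgs.mul_norm_sq_le_second_diff x y)
  refine ⟨div_pos hν hD, fun lam hl hlam => ?_⟩
  obtain ⟨⟨hlamD, hlam1⟩, hlamσ⟩ := by simpa only [le_min_iff] using hlam
  have hνD := (le_div_iff₀ hD).1 hlamD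
  have hρσ : ρ * lam ≤ 3 * σ / 2 := by
    rw [le_div_iff₀ (by positivity)] at hlamσ
    linarith
  have hρσ' := mul_le_mul_of_nonneg_right hρσ (mul_nonneg hl.le hr.le)
  linear_combination dc_descent_le hgs hhs hw hl.le hlam1 + hνD + hρσ'
end
end

section
/- Let g, h : ℝⁿ → ℝ be strongly convex with modulus σ > 0, let ρ > 0 and ν ≥ 0, let x, y ∈ ℝⁿ with d := y − x, and let w ∈ ∂h(x) ∩ ∂g(y). If λ > 0 satisfies the line-search inequality φ(y + λ d) ≤ φ(y) − ρ λ² ‖d‖² + ν, then the next iterate x⁺ := y + λ d satisfies φ(x⁺) ≤ φ(x) − (σ + ρ λ²) ‖d‖² + ν, where φ = g − h. -/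
open Set Filter Topology

noncomputable section

/-!
A subgradient of a `σ`-strongly convex function gives a quadratic lower bound
`f z ≥ f x + ⟨w, z - x⟩ + σ/2 ‖z - x‖²`. Adding these bounds for `g` at `y` (tested at `x`) and
for `h` at `x` (tested at `y`), the inner products cancel and `φ y ≤ φ x - σ ‖y - x‖²`;
the line-search inequality then carries this descent over to `y + λ (y - x)`.
-/

namespace StrongConvexWith

variable {n : ℕ} {σ : ℝ} {f : EuclideanSpace ℝ (Fin n) → ℝ} {x w : EuclideanSpace ℝ (Fin n)}

/-- Testing the subgradient inequality at `x + t (z - x)` against strong convexity on `[x, z]`,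
then dividing by `t`. -/
lemma add_inner_add_mul_sq_le_of_mem_subdiff (hf : StrongConvexWith σ f) (hw : w ∈ subdiff f x)
    (z : EuclideanSpace ℝ (Fin n)) {t : ℝ} (ht₀ : 0 < t) (ht₁ : t < 1) :
    f x + inner ℝ w (z - x) + σ / 2 * (1 - t) * ‖z - x‖ ^ 2 ≤ f z := by
  have hsub := hw (t • z + (1 - t) • x)
  have hsegment : t • z + (1 - t) • x - x = t • (z - x) := by module
  rw [hsegment, real_inner_smul_right] at hsub
  have hconv := hf z x t ht₀ ht₁
  have hscaled : t * (f x + inner ℝ w (z - x) + σ / 2 * (1 - t) * ‖z - x‖ ^ 2) ≤ t * f z := by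
    linarith
  exact le_of_mul_le_mul_left hscaled ht₀

lemma add_inner_add_sq_le_of_mem_subdiff_s5 (hf : StrongConvexWith σ f) (hw : w ∈ subdiff f x)
    (z : EuclideanSpace ℝ (Fin n)) :
    f x + inner ℝ w (z - x) + σ / 2 * ‖z - x‖ ^ 2 ≤ f z := by
  have hlim : Tendsto (fun t : ℝ => f x + inner ℝ w (z - x) + σ / 2 * (1 - t) * ‖z - x‖ ^ 2)
      (𝓝[>] 0) (𝓝 (f x + inner ℝ w (z - x) + σ / 2 * ‖z - x‖ ^ 2)) := by
    have hcont : Continuous fun t : ℝ => f x + inner ℝ w (z - x) + σ / 2 * (1 - t) * ‖z - x‖ ^ 2 := by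
      fun_prop
    simpa using tendsto_nhdsWithin_of_tendsto_nhds (hcont.tendsto 0)
  refine le_of_tendsto hlim ?_
  filter_upwards [Ioo_mem_nhdsGT (zero_lt_one' ℝ)] with t ht
  exact hf.add_inner_add_mul_sq_le_of_mem_subdiff hw z ht.1 ht.2

end StrongConvexWith

lemma sub_le_sub_sub_of_mem_subdiff_inter {n : ℕ} {σ : ℝ} {g h : EuclideanSpace ℝ (Fin n) → ℝ}
    (hgs : StrongConvexWith σ g) (hhs : StrongConvexWith σ h) {x y w : EuclideanSpace ℝ (Fin n)}
    (hw : w ∈ subdiff h x ∩ subdiff g y) :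
    g y - h y ≤ g x - h x - σ * ‖y - x‖ ^ 2 := by
  have hg := hgs.add_inner_add_sq_le_of_mem_subdiff_s5 hw.2 x
  have hh := hhs.add_inner_add_sq_le_of_mem_subdiff_s5 hw.1 y
  rw [← neg_sub y x, inner_neg_right, norm_neg] at hg
  linarith

theorem stmt5_general {n : ℕ} (g h : EuclideanSpace ℝ (Fin n) → ℝ) (σ ρ ν : ℝ)
    (hgs : StrongConvexWith σ g) (hhs : StrongConvexWith σ h)
    (x y w : EuclideanSpace ℝ (Fin n))
    (hw : w ∈ subdiff h x ∩ subdiff g y)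
    (lam : ℝ)
    (hls : g (y + lam • (y - x)) - h (y + lam • (y - x)) ≤
      (g y - h y) - ρ * lam ^ 2 * ‖y - x‖ ^ 2 + ν) :
    g (y + lam • (y - x)) - h (y + lam • (y - x)) ≤
      (g x - h x) - (σ + ρ * lam ^ 2) * ‖y - x‖ ^ 2 + ν := by
  have hdescent := sub_le_sub_sub_of_mem_subdiff_inter hgs hhs hw
  linarith

theorem stmt5 {n : ℕ} (g h : EuclideanSpace ℝ (Fin n) → ℝ) (σ ρ ν : ℝ)
    (hσ : 0 < σ) (hρ : 0 < ρ) (hν : 0 ≤ ν)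
    (hgs : StrongConvexWith σ g) (hhs : StrongConvexWith σ h)
    (x y w : EuclideanSpace ℝ (Fin n))
    (hw : w ∈ subdiff h x ∩ subdiff g y)
    (lam : ℝ) (hlam : 0 < lam)
    (hls : g (y + lam • (y - x)) - h (y + lam • (y - x)) ≤
      (g y - h y) - ρ * lam ^ 2 * ‖y - x‖ ^ 2 + ν) :
    g (y + lam • (y - x)) - h (y + lam • (y - x)) ≤
      (g x - h x) - (σ + ρ * lam ^ 2) * ‖y - x‖ ^ 2 + ν :=
  stmt5_general g h σ ρ ν hgs hhs x y w hw lam hls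
end
end

section
/- Let (f_k)_{k∈ℕ} be a real sequence bounded below by φ* ∈ ℝ, let (ν_k)_{k∈ℕ} ⊂ [0, ∞), and let δ_min ∈ (0, 1) and (δ_{k+1})_{k∈ℕ} ⊂ [δ_min, 1] be such that for every k: f_k − f_{k+1} + ν_k ≥ 0 and ν_{k+1} ≤ (1 − δ_{k+1}) ( f_k − f_{k+1} + ν_k ). Then the series ∑_{k=0}^{∞} ν_k converges, with ∑_{k=0}^{∞} ν_k ≤ ν_0 + ((1 − δ_min)/δ_min) ( f_0 − φ* + ν_0 ). (Here f_k plays the role of φ(x^k) for the nmBDCA iterates; this shows that strategy (S1) with δ_min > 0 implies the summability condition (S2).) -/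
/-!
With `a k = f k - f (k+1) + ν k ≥ 0`, the recursion gives `ν (k+1) ≤ (1 - δmin) a k`, i.e.
`δmin a k ≤ (f k + ν k) - (f (k+1) + ν (k+1))`. Since `f + ν` is bounded below by `φs`, telescoping
bounds `∑ a k` by `(f 0 + ν 0 - φs) / δmin`, and hence `∑ ν (k+1)` by `(1 - δmin)` times that.
-/

open Set Filter Topology

noncomputable section

open Finset in
theorem sum_range_le_div_of_mul_le_sub {a D : ℕ → ℝ} {c m : ℝ} (hc : 0 < c)
    (hdesc : ∀ k, c * a k ≤ D k - D (k + 1)) (hm : ∀ k, m ≤ D k) (n : ℕ) :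
    ∑ k ∈ range n, a k ≤ (D 0 - m) / c := by
  rw [le_div_iff₀' hc, mul_sum]
  calc ∑ k ∈ range n, c * a k
      ≤ ∑ k ∈ range n, (D k - D (k + 1)) := sum_le_sum fun k _ => hdesc k
    _ = D 0 - D n := sum_range_sub' D n
    _ ≤ D 0 - m := by linarith [hm n]

open Finset in
theorem summable_and_tsum_le_of_sum_range_succ_le {ν : ℕ → ℝ} {B : ℝ} (hν : ∀ k, 0 ≤ ν k)
    (h : ∀ n, ∑ k ∈ range n, ν (k + 1) ≤ B) :
    Summable ν ∧ ∑' k, ν k ≤ ν 0 + B := by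
  have hpartial : ∀ n, ∑ k ∈ range n, ν k ≤ ν 0 + B := by
    rintro (_ | n)
    · simpa using add_nonneg (hν 0) (by simpa using h 0)
    · rw [sum_range_succ']
      linarith [h n]
  exact ⟨summable_of_sum_range_le hν hpartial, Real.tsum_le_of_sum_range_le hν hpartial⟩

open Finset in
theorem stmt6_general (f ν δ : ℕ → ℝ) (φs δmin : ℝ)
    (hbd : ∀ k, φs ≤ f k) (hν : ∀ k, 0 ≤ ν k)
    (hδmin0 : 0 < δmin)
    (hδ : ∀ k, δmin ≤ δ (k + 1) ∧ δ (k + 1) ≤ 1)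
    (hpos : ∀ k, 0 ≤ f k - f (k + 1) + ν k)
    (hrec : ∀ k, ν (k + 1) ≤ (1 - δ (k + 1)) * (f k - f (k + 1) + ν k)) :
    Summable ν ∧ ∑' k, ν k ≤ ν 0 + (1 - δmin) / δmin * (f 0 - φs + ν 0) := by
  have hδmin_le_one : δmin ≤ 1 := (hδ 0).1.trans (hδ 0).2
  have hν_succ : ∀ k, ν (k + 1) ≤ (1 - δmin) * (f k - f (k + 1) + ν k) := fun k =>
    (hrec k).trans (mul_le_mul_of_nonneg_right (by linarith [(hδ k).1]) (hpos k))
  have hsum := sum_range_le_div_of_mul_le_sub (a := fun k => f k - f (k + 1) + ν k)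
    (D := fun k => f k + ν k) (m := φs) hδmin0
    (fun k => by linarith [hν_succ k]) (fun k => by linarith [hbd k, hν k])
  refine summable_and_tsum_le_of_sum_range_succ_le hν fun n => ?_
  calc ∑ k ∈ range n, ν (k + 1)
      ≤ ∑ k ∈ range n, (1 - δmin) * (f k - f (k + 1) + ν k) := sum_le_sum fun k _ => hν_succ k
    _ = (1 - δmin) * ∑ k ∈ range n, (f k - f (k + 1) + ν k) := (mul_sum ..).symm
    _ ≤ (1 - δmin) * ((f 0 + ν 0 - φs) / δmin) :=
        mul_le_mul_of_nonneg_left (hsum n) (sub_nonneg.2 hδmin_le_one)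
    _ = (1 - δmin) / δmin * (f 0 - φs + ν 0) := by ring

theorem stmt6 (f ν δ : ℕ → ℝ) (φs δmin : ℝ)
    (hbd : ∀ k, φs ≤ f k) (hν : ∀ k, 0 ≤ ν k)
    (hδmin0 : 0 < δmin) (hδmin1 : δmin < 1)
    (hδ : ∀ k, δmin ≤ δ (k + 1) ∧ δ (k + 1) ≤ 1)
    (hpos : ∀ k, 0 ≤ f k - f (k + 1) + ν k)
    (hrec : ∀ k, ν (k + 1) ≤ (1 - δ (k + 1)) * (f k - f (k + 1) + ν k)) :
    Summable ν ∧ ∑' k, ν k ≤ ν 0 + (1 - δmin) / δmin * (f 0 - φs + ν 0) :=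
  stmt6_general f ν δ φs δmin hbd hν hδmin0 hδ hpos hrec
end
end

section
/- Let (f_k)_{k∈ℕ} be a real sequence bounded below by φ* ∈ ℝ, let (ν_k)_{k∈ℕ} ⊂ [0, ∞), and suppose that for every k: f_k − f_{k+1} + ν_k ≥ 0 and ν_{k+1} ≤ (1 − δ_{k+1}) ( f_k − f_{k+1} + ν_k ) for some δ_{k+1} ∈ [0, 1]. Then the sequence ( f_k + ν_k )_{k∈ℕ} is non-increasing and convergent. (Here f_k plays the role of φ(x^k) for the nmBDCA iterates, where φ is bounded below; this is the monotonicity result under strategy (S1).) -/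
open Set Filter Topology

noncomputable section

theorem add_le_add_of_le_one_sub_mul {f f' ν ν' δ : ℝ} (hδ : 0 ≤ δ)
    (hpos : 0 ≤ f - f' + ν) (hrec : ν' ≤ (1 - δ) * (f - f' + ν)) :
    f' + ν' ≤ f + ν := by
  nlinarith [mul_nonneg hδ hpos]

theorem antitone_add_of_le_one_sub_mul (f ν δ : ℕ → ℝ) (hδ : ∀ k, 0 ≤ δ (k + 1))
    (hpos : ∀ k, 0 ≤ f k - f (k + 1) + ν k)
    (hrec : ∀ k, ν (k + 1) ≤ (1 - δ (k + 1)) * (f k - f (k + 1) + ν k)) :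
    Antitone (fun k => f k + ν k) :=
  antitone_nat_of_succ_le fun k => add_le_add_of_le_one_sub_mul (hδ k) (hpos k) (hrec k)

theorem bddBelow_range_add_of_nonneg {ι : Type*} (f ν : ι → ℝ) {m : ℝ}
    (hbd : ∀ k, m ≤ f k) (hν : ∀ k, 0 ≤ ν k) :
    BddBelow (range fun k => f k + ν k) :=
  ⟨m, forall_mem_range.2 fun k => le_add_of_le_of_nonneg (hbd k) (hν k)⟩

theorem stmt7 (f ν δ : ℕ → ℝ) (φs : ℝ)
    (hbd : ∀ k, φs ≤ f k) (hν : ∀ k, 0 ≤ ν k)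
    (hδ : ∀ k, 0 ≤ δ (k + 1) ∧ δ (k + 1) ≤ 1)
    (hpos : ∀ k, 0 ≤ f k - f (k + 1) + ν k)
    (hrec : ∀ k, ν (k + 1) ≤ (1 - δ (k + 1)) * (f k - f (k + 1) + ν k)) :
    Antitone (fun k => f k + ν k) ∧
      ∃ l : ℝ, Filter.Tendsto (fun k => f k + ν k) Filter.atTop (nhds l) := by
  have hanti := antitone_add_of_le_one_sub_mul f ν δ (fun k => (hδ k).1) hpos hrec
  exact ⟨hanti, _, tendsto_atTop_ciInf hanti (bddBelow_range_add_of_nonneg f ν hbd hν)⟩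
end
end

section
/- Let g, h : ℝⁿ → ℝ be convex, and let (x^k), (y^k), (w^k) be sequences in ℝⁿ with w^k ∈ ∂h(x^k) and w^k ∈ ∂g(y^k) for every k, and set d^k := y^k − x^k. If ‖d^k‖ → 0 as k → ∞ and x̄ is a cluster point of (x^k) (i.e. some subsequence x^{k_ℓ} → x̄), then there exists w̄ ∈ ∂g(x̄) ∩ ∂h(x̄); that is, every cluster point of (x^k) is a critical point of φ = g − h. -/
open Set Filter Topology

noncomputable section

/-! Subgradients of a continuous function are bounded on compact sets, because the subgradient
inequality at `x` tested at distance `1` bounds `‖w‖` by the oscillation of `f` on a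
neighbourhood. So along the subsequence of `x` converging to `xbar` the common subgradients `w`
have a further convergent subsequence; `y` converges to `xbar` along it too, and the graph of the
subdifferential of a continuous function is closed, so the limit is a subgradient of both `g`
and `h` at `xbar`. -/

section Subdifferential

variable {n : ℕ} {f : EuclideanSpace ℝ (Fin n) → ℝ}

theorem mul_norm_le_of_mem_subdiff {x w : EuclideanSpace ℝ (Fin n)} {r M : ℝ}
    (hw : w ∈ subdiff f x) (hr : 0 ≤ r) (hM : ∀ z ∈ Metric.closedBall x r, f z ≤ M) :
    r * ‖w‖ ≤ M - f x := by
  rcases eq_or_ne w 0 with rfl | hw0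
  · simpa using hM x (Metric.mem_closedBall_self hr)
  set z := x + (r / ‖w‖) • w
  have hzx : z - x = (r / ‖w‖) • w := add_sub_cancel_left x _
  have hz : z ∈ Metric.closedBall x r := by
    rw [Metric.mem_closedBall, dist_eq_norm, hzx, norm_smul, Real.norm_eq_abs,
      abs_of_nonneg (by positivity), div_mul_cancel₀ r (norm_ne_zero_iff.mpr hw0)]
  have hinner : inner ℝ w (z - x) = r * ‖w‖ := by
    rw [hzx, inner_smul_right, real_inner_self_eq_norm_sq]
    field_simp
  linarith [hw z, hM z hz]

theorem isBounded_biUnion_subdiff (hf : Continuous f) {K : Set (EuclideanSpace ℝ (Fin n))}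
    (hK : IsCompact K) : Bornology.IsBounded (⋃ x ∈ K, subdiff f x) := by
  obtain ⟨M, hM⟩ := (hK.cthickening (r := 1)).bddAbove_image hf.continuousOn
  obtain ⟨m, hm⟩ := hK.bddBelow_image hf.continuousOn
  refine isBounded_iff_forall_norm_le.mpr ⟨M - m, ?_⟩
  simp only [Set.mem_iUnion]
  rintro w ⟨x, hx, hw⟩
  have := mul_norm_le_of_mem_subdiff hw zero_le_one fun z hz =>
    hM ⟨z, Metric.closedBall_subset_cthickening hx 1 hz, rfl⟩
  linarith [hm ⟨x, hx, rfl⟩]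

theorem mem_subdiff_of_tendsto {ι : Type*} {l : Filter ι} [l.NeBot]
    {x w : ι → EuclideanSpace ℝ (Fin n)} {xbar wbar : EuclideanSpace ℝ (Fin n)}
    (hf : ContinuousAt f xbar) (hx : Tendsto x l (𝓝 xbar)) (hw : Tendsto w l (𝓝 wbar))
    (hmem : ∀ᶠ i in l, w i ∈ subdiff f (x i)) : wbar ∈ subdiff f xbar := by
  intro z
  have hlim : Tendsto (fun i => f (x i) + inner ℝ (w i) (z - x i)) l
      (𝓝 (f xbar + inner ℝ wbar (z - xbar))) :=
    (hf.tendsto.comp hx).add (hw.inner (tendsto_const_nhds.sub hx))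
  exact le_of_tendsto hlim (hmem.mono fun i hi => hi z)

end Subdifferential

theorem stmt8 {n : ℕ} (g h : EuclideanSpace ℝ (Fin n) → ℝ)
    (hgconv : ConvexOn ℝ Set.univ g) (hhconv : ConvexOn ℝ Set.univ h)
    (x y w : ℕ → EuclideanSpace ℝ (Fin n))
    (hwh : ∀ k, w k ∈ subdiff h (x k)) (hwg : ∀ k, w k ∈ subdiff g (y k))
    (hd : Filter.Tendsto (fun k => ‖y k - x k‖) Filter.atTop (nhds 0))
    (xbar : EuclideanSpace ℝ (Fin n))
    (hcl : ∃ φ : ℕ → ℕ, StrictMono φ ∧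
      Filter.Tendsto (fun ℓ => x (φ ℓ)) Filter.atTop (nhds xbar)) :
    ∃ wbar, wbar ∈ subdiff g xbar ∩ subdiff h xbar := by
  obtain ⟨φ, hφ, hxφ⟩ := hcl
  have hg : Continuous g := continuousOn_univ.mp (hgconv.continuousOn isOpen_univ)
  have hh : Continuous h := continuousOn_univ.mp (hhconv.continuousOn isOpen_univ)
  have hx_near : ∀ᶠ ℓ in atTop, x (φ ℓ) ∈ Metric.closedBall xbar 1 :=
    hxφ (Metric.closedBall_mem_nhds xbar one_pos)
  have hw_bdd : ∃ᶠ ℓ in atTop, w (φ ℓ) ∈ ⋃ x ∈ Metric.closedBall xbar 1, subdiff h x :=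
    (hx_near.mono fun ℓ hℓ => Set.mem_biUnion hℓ (hwh (φ ℓ))).frequently
  obtain ⟨wbar, -, ψ, hψ, hwψ⟩ := tendsto_subseq_of_frequently_bounded
    (isBounded_biUnion_subdiff hh (isCompact_closedBall xbar 1)) hw_bdd
  have hxφψ : Tendsto (x ∘ φ ∘ ψ) atTop (𝓝 xbar) := hxφ.comp hψ.tendsto_atTop
  have hyφψ : Tendsto (y ∘ φ ∘ ψ) atTop (𝓝 xbar) := by
    have hdφψ := tendsto_zero_iff_norm_tendsto_zero.mpr (hd.comp (hφ.comp hψ).tendsto_atTop)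
    simpa [Function.comp_def] using hxφψ.add hdφψ
  exact ⟨wbar, mem_subdiff_of_tendsto hg.continuousAt hyφψ hwψ (.of_forall fun _ => hwg _),
    mem_subdiff_of_tendsto hh.continuousAt hxφψ hwψ (.of_forall fun _ => hwh _)⟩
end
end

section
/- Let g, h : ℝⁿ → ℝ be strongly convex with modulus σ > 0 and assume φ := g − h is bounded below. Let ρ > 0 and let sequences (x^k), (y^k), (w^k) in ℝⁿ, stepsizes t_k > 0 and parameters ν_k ≥ 0 satisfy, for every k: w^k ∈ ∂h(x^k), w^k ∈ ∂g(y^k), d^k := y^k − x^k, x^{k+1} = y^k + t_k d^k, and φ(x^{k+1}) ≤ φ(y^k) − ρ t_k² ‖d^k‖² + ν_k. If for every δ > 0 there exists k₀ ∈ ℕ such that ν_k ≤ δ ‖d^k‖² for all k ≥ k₀, then ‖d^k‖ → 0 and every cluster point of (x^k) is a critical point of φ, i.e. for every cluster point x̄ there exists w̄ ∈ ∂g(x̄) ∩ ∂h(x̄). -/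
open Set Filter Topology

noncomputable section

/-!
Testing the strong subgradient inequalities of `h` at `x^k` and of `g` at `y^k` against each
other cancels `w^k` and gives `φ(y^k) ≤ φ(x^k) - σ/2 ‖d^k‖²`. With the line-search inequality and
(S3) for `δ = σ/4`, `φ(x^k)` eventually decreases by `σ/4 ‖d^k‖²`, so `∑ ‖d^k‖² < ∞` since `φ`
is bounded below. Along a subsequence `x^k → x̄` we then also have `y^k → x̄`; subgradients of
the continuous function `h` are locally bounded, so a further subsequence of `w^k` converges, and
the limit lies in `∂g(x̄) ∩ ∂h(x̄)` because subdifferentials have closed graphs.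
-/

namespace StrongConvexWith

variable {n : ℕ} {σ : ℝ} {f : EuclideanSpace ℝ (Fin n) → ℝ}

theorem convexOn (hσ : 0 ≤ σ) (hf : StrongConvexWith σ f) : ConvexOn ℝ univ f := by
  refine convexOn_iff_forall_pos.mpr ⟨convex_univ, fun x _ y _ a b ha hb hab => ?_⟩
  obtain rfl : b = 1 - a := by linarith
  have hstrong := hf x y a ha (by linarith)
  have hgap : 0 ≤ σ / 2 * (a * (1 - a) * ‖x - y‖ ^ 2) := by positivity
  simp only [smul_eq_mul]
  linarith

theorem continuous (hσ : 0 ≤ σ) (hf : StrongConvexWith σ f) : Continuous f :=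
  (hf.convexOn hσ).locallyLipschitz.continuous

/-- Testing `w ∈ ∂f y` only at the midpoint of `y` and `z` costs half of the optimal
constant `σ / 2`. -/
theorem add_inner_add_sq_le (hf : StrongConvexWith σ f) {y w : EuclideanSpace ℝ (Fin n)}
    (hw : w ∈ subdiff f y) (z : EuclideanSpace ℝ (Fin n)) :
    f y + inner ℝ w (z - y) + σ / 4 * ‖z - y‖ ^ 2 ≤ f z := by
  have hmid := hf z y (1 / 2) (by norm_num) (by norm_num)
  have hsub := hw ((1 / 2 : ℝ) • z + (1 / 2 : ℝ) • y)
  rw [show (1 / 2 : ℝ) • z + (1 / 2 : ℝ) • y - y = (1 / 2 : ℝ) • (z - y) by module,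
    real_inner_smul_right] at hsub
  linarith

end StrongConvexWith

section Subdifferential

variable {n : ℕ} {f : EuclideanSpace ℝ (Fin n) → ℝ}

theorem sub_le_sub_sub_of_mem_subdiff {g h : EuclideanSpace ℝ (Fin n) → ℝ} {σ : ℝ}
    (hg : StrongConvexWith σ g) (hh : StrongConvexWith σ h) {x y w : EuclideanSpace ℝ (Fin n)}
    (hwh : w ∈ subdiff h x) (hwg : w ∈ subdiff g y) :
    g y - h y ≤ g x - h x - σ / 2 * ‖y - x‖ ^ 2 := by
  have hx := hh.add_inner_add_sq_le hwh y
  have hy := hg.add_inner_add_sq_le hwg x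
  rw [← neg_sub y x, inner_neg_right, norm_neg] at hy
  linarith

theorem mem_subdiff_of_tendsto_s11 (hf : Continuous f) {x w : ℕ → EuclideanSpace ℝ (Fin n)}
    {x₀ w₀ : EuclideanSpace ℝ (Fin n)} (hx : Tendsto x atTop (𝓝 x₀))
    (hw : Tendsto w atTop (𝓝 w₀)) (hxw : ∀ k, w k ∈ subdiff f (x k)) :
    w₀ ∈ subdiff f x₀ := fun z =>
  le_of_tendsto' (((hf.tendsto x₀).comp hx).add (hw.inner (tendsto_const_nhds.sub hx)))
    fun k => hxw k z

theorem exists_norm_le_of_mem_subdiff (hf : Continuous f) (x₀ : EuclideanSpace ℝ (Fin n)) :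
    ∃ C, ∀ x ∈ Metric.closedBall x₀ 1, ∀ w ∈ subdiff f x, ‖w‖ ≤ C := by
  obtain ⟨B, hB⟩ :=
    (isCompact_closedBall x₀ 2).exists_bound_of_continuousOn hf.continuousOn
  refine ⟨2 * B, fun x hx w hw => ?_⟩
  have hunit : ‖(‖w‖⁻¹ : ℝ) • w‖ ≤ 1 := by
    rcases eq_or_ne w 0 with rfl | hw0
    · simp
    · exact (norm_smul_inv_norm hw0).le
  have hz : x + (‖w‖⁻¹ : ℝ) • w ∈ Metric.closedBall x₀ 2 := by
    rw [Metric.mem_closedBall] at hx ⊢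
    calc dist (x + (‖w‖⁻¹ : ℝ) • w) x₀ ≤ dist x x₀ + ‖(‖w‖⁻¹ : ℝ) • w‖ := by
          rw [dist_eq_norm, dist_eq_norm, add_sub_right_comm]; exact norm_add_le _ _
      _ ≤ 2 := by linarith
  have hinner : inner ℝ w (x + (‖w‖⁻¹ : ℝ) • w - x) = ‖w‖ := by
    rw [add_sub_cancel_left, real_inner_smul_right, real_inner_self_eq_norm_sq]
    rcases eq_or_ne ‖w‖ 0 with h0 | h0
    · simp [h0]
    · field_simp
  have htest := hw (x + (‖w‖⁻¹ : ℝ) • w)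
  rw [hinner] at htest
  have hfx := abs_le.mp (hB x (Metric.closedBall_subset_closedBall (by norm_num) hx))
  have hfz := abs_le.mp (hB _ hz)
  linarith

theorem exists_tendsto_subseq_of_mem_subdiff (hf : Continuous f)
    {x w : ℕ → EuclideanSpace ℝ (Fin n)} {x₀ : EuclideanSpace ℝ (Fin n)}
    (hx : Tendsto x atTop (𝓝 x₀)) (hxw : ∀ k, w k ∈ subdiff f (x k)) :
    ∃ w₀, ∃ χ : ℕ → ℕ, StrictMono χ ∧ Tendsto (w ∘ χ) atTop (𝓝 w₀) := by
  obtain ⟨C, hC⟩ := exists_norm_le_of_mem_subdiff hf x₀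
  have hbounded : ∀ᶠ k in atTop, w k ∈ Metric.closedBall 0 C :=
    (hx.eventually (Metric.closedBall_mem_nhds x₀ one_pos)).mono fun k hk =>
      mem_closedBall_zero_iff.mpr (hC _ hk _ (hxw k))
  obtain ⟨w₀, -, χ, hχ, hwχ⟩ :=
    tendsto_subseq_of_frequently_bounded Metric.isBounded_closedBall hbounded.frequently
  exact ⟨w₀, χ, hχ, hwχ⟩

end Subdifferential

theorem tendsto_zero_of_eventually_le_sub_of_bddBelow {f a : ℕ → ℝ} (hf : BddBelow (range f))
    (ha : ∀ k, 0 ≤ a k) (hdesc : ∀ᶠ k in atTop, f (k + 1) ≤ f k - a k) :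
    Tendsto a atTop (𝓝 0) := by
  obtain ⟨k₀, hk₀⟩ := eventually_atTop.mp hdesc
  obtain ⟨m, hm⟩ := hf
  have hpartial : ∀ N, ∑ j ∈ Finset.range N, a (j + k₀) ≤ f k₀ - f (N + k₀) := by
    intro N
    induction N with
    | zero => simp
    | succ N ih =>
      rw [Finset.sum_range_succ, show N + 1 + k₀ = N + k₀ + 1 by ring]
      linarith [hk₀ (N + k₀) (Nat.le_add_left _ _)]
  have hsum : Summable fun j => a (j + k₀) :=
    summable_of_sum_range_le (c := f k₀ - m) (fun j => ha _)
      fun N => (hpartial N).trans (by linarith [hm (mem_range_self (N + k₀))])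
  exact (tendsto_add_atTop_iff_nat k₀).mp hsum.tendsto_atTop_zero

theorem stmt11_general {n : ℕ} (g h : EuclideanSpace ℝ (Fin n) → ℝ) (σ ρ : ℝ)
    (hσ : 0 < σ) (hρ : 0 < ρ)
    (hgs : StrongConvexWith σ g) (hhs : StrongConvexWith σ h)
    (hbd : BddBelow (Set.range fun z => g z - h z))
    (x y w : ℕ → EuclideanSpace ℝ (Fin n)) (t ν : ℕ → ℝ)
    (hwh : ∀ k, w k ∈ subdiff h (x k)) (hwg : ∀ k, w k ∈ subdiff g (y k))
    (hls : ∀ k, g (x (k + 1)) - h (x (k + 1)) ≤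
      (g (y k) - h (y k)) - ρ * t k ^ 2 * ‖y k - x k‖ ^ 2 + ν k)
    (hS3 : ∀ δ : ℝ, 0 < δ → ∃ k₀ : ℕ, ∀ k ≥ k₀, ν k ≤ δ * ‖y k - x k‖ ^ 2) :
    Filter.Tendsto (fun k => ‖y k - x k‖) Filter.atTop (nhds 0) ∧
      (∀ xbar : EuclideanSpace ℝ (Fin n),
        (∃ φ : ℕ → ℕ, StrictMono φ ∧
          Filter.Tendsto (fun ℓ => x (φ ℓ)) Filter.atTop (nhds xbar)) →
        ∃ wbar, wbar ∈ subdiff g xbar ∩ subdiff h xbar) := by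
  obtain ⟨k₀, hk₀⟩ := hS3 (σ / 4) (by positivity)
  have hdesc : ∀ᶠ k in atTop, g (x (k + 1)) - h (x (k + 1)) ≤
      g (x k) - h (x k) - σ / 4 * ‖y k - x k‖ ^ 2 := by
    filter_upwards [eventually_ge_atTop k₀] with k hk
    have hdca := sub_le_sub_sub_of_mem_subdiff hgs hhs (hwh k) (hwg k)
    have hpenalty : 0 ≤ ρ * t k ^ 2 * ‖y k - x k‖ ^ 2 := by positivity
    linarith [hls k, hk₀ k hk]
  have hsq : Tendsto (fun k => σ / 4 * ‖y k - x k‖ ^ 2) atTop (𝓝 0) :=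
    tendsto_zero_of_eventually_le_sub_of_bddBelow (hbd.mono (range_comp_subset_range x _))
      (fun k => by positivity) hdesc
  have hd : Tendsto (fun k => ‖y k - x k‖) atTop (𝓝 0) := by
    have h2 : Tendsto (fun k => ‖y k - x k‖ ^ 2) atTop (𝓝 0) := by
      simpa [← mul_assoc, hσ.ne'] using hsq.const_mul (4 / σ)
    simpa [Real.sqrt_sq (norm_nonneg _)] using h2.sqrt
  refine ⟨hd, fun xbar ⟨ψ, hψ, hxψ⟩ => ?_⟩
  obtain ⟨wbar, χ, hχ, hwχ⟩ :=
    exists_tendsto_subseq_of_mem_subdiff (hhs.continuous hσ.le) hxψ fun ℓ => hwh (ψ ℓ)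
  have hxψχ : Tendsto (fun ℓ => x (ψ (χ ℓ))) atTop (𝓝 xbar) := hxψ.comp hχ.tendsto_atTop
  have hyψχ : Tendsto (fun ℓ => y (ψ (χ ℓ))) atTop (𝓝 xbar) := by
    have hdψχ := (tendsto_zero_iff_norm_tendsto_zero.mpr hd).comp (hψ.comp hχ).tendsto_atTop
    simpa using hxψχ.add hdψχ
  exact ⟨wbar, mem_subdiff_of_tendsto_s11 (hgs.continuous hσ.le) hyψχ hwχ fun ℓ => hwg _,
    mem_subdiff_of_tendsto_s11 (hhs.continuous hσ.le) hxψχ hwχ fun ℓ => hwh _⟩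

theorem stmt11 {n : ℕ} (g h : EuclideanSpace ℝ (Fin n) → ℝ) (σ ρ : ℝ)
    (hσ : 0 < σ) (hρ : 0 < ρ)
    (hgs : StrongConvexWith σ g) (hhs : StrongConvexWith σ h)
    (hbd : BddBelow (Set.range fun z => g z - h z))
    (x y w : ℕ → EuclideanSpace ℝ (Fin n)) (t ν : ℕ → ℝ)
    (ht : ∀ k, 0 < t k) (hν : ∀ k, 0 ≤ ν k)
    (hwh : ∀ k, w k ∈ subdiff h (x k)) (hwg : ∀ k, w k ∈ subdiff g (y k))
    (hstep : ∀ k, x (k + 1) = y k + t k • (y k - x k))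
    (hls : ∀ k, g (x (k + 1)) - h (x (k + 1)) ≤
      (g (y k) - h (y k)) - ρ * t k ^ 2 * ‖y k - x k‖ ^ 2 + ν k)
    (hS3 : ∀ δ : ℝ, 0 < δ → ∃ k₀ : ℕ, ∀ k ≥ k₀, ν k ≤ δ * ‖y k - x k‖ ^ 2) :
    Filter.Tendsto (fun k => ‖y k - x k‖) Filter.atTop (nhds 0) ∧
      (∀ xbar : EuclideanSpace ℝ (Fin n),
        (∃ φ : ℕ → ℕ, StrictMono φ ∧
          Filter.Tendsto (fun ℓ => x (φ ℓ)) Filter.atTop (nhds xbar)) →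
        ∃ wbar, wbar ∈ subdiff g xbar ∩ subdiff h xbar) :=
  stmt11_general g h σ ρ hσ hρ hgs hhs hbd x y w t ν hwh hwg hls hS3
end
end

section
/- Let g : ℝⁿ → ℝ be differentiable with ∇g Lipschitz continuous with constant L > 0, let h : ℝⁿ → ℝ be convex, and set φ := g − h. Then for all x, d ∈ ℝⁿ, all λ ∈ ℝ, and all w ∈ ∂h(x): φ(x + λ d) ≤ φ(x) + λ ⟨∇g(x) − w, d⟩ + (L/2) λ² ‖d‖². Moreover, if h is strongly convex with modulus σ > 0, then φ(x + λ d) ≤ φ(x) + λ ⟨∇g(x) − w, d⟩ + ((L − σ)/2) λ² ‖d‖². -/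
open Set Filter Topology

noncomputable section

/-!
The descent lemma bounds `g (x + v)` above by `g x + ⟪∇g x, v⟫ + L / 2 * ‖v‖ ^ 2`, while a
subgradient `w` of `h` at `x` bounds `h (x + v)` below by `h x + ⟪w, v⟫`, plus `σ / 2 * ‖v‖ ^ 2`
when `h` is `σ`-strongly convex; subtracting the two bounds gives both inequalities. The strongly
convex minorant follows by applying the subgradient inequality at `x + t • (z - x)`, comparing with
strong convexity along the chord, dividing by `t` and letting `t → 0⁺`.
-/

section InnerProductSpace

variable {E : Type*} [NormedAddCommGroup E] [InnerProductSpace ℝ E]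

theorem inner_sub_le_mul_sq_of_lipschitz {g' : E → E} {L : ℝ}
    (hlip : ∀ u v, ‖g' u - g' v‖ ≤ L * ‖u - v‖) (x v : E) {t : ℝ} (ht : 0 ≤ t) :
    inner ℝ (g' (x + t • v) - g' x) v ≤ L * t * ‖v‖ ^ 2 :=
  calc inner ℝ (g' (x + t • v) - g' x) v
      ≤ ‖g' (x + t • v) - g' x‖ * ‖v‖ := real_inner_le_norm _ _
    _ ≤ L * ‖(x + t • v) - x‖ * ‖v‖ := by gcongr; exact hlip _ _
    _ = L * t * ‖v‖ ^ 2 := by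
      rw [add_sub_cancel_left, norm_smul, Real.norm_of_nonneg ht]; ring

/-- The descent lemma: on `[0, 1]`, `t ↦ g (x + t • v)` starts at the value of the quadratic
`t ↦ g x + t * ⟪g' x, v⟫ + L / 2 * t ^ 2 * ‖v‖ ^ 2`, and the Lipschitz bound makes its derivative
at most the quadratic's. -/
theorem le_add_inner_add_sq_of_lipschitz_gradient [CompleteSpace E]
    {g : E → ℝ} {g' : E → E} {L : ℝ}
    (hgrad : ∀ z, HasGradientAt g (g' z) z) (hlip : ∀ u v, ‖g' u - g' v‖ ≤ L * ‖u - v‖)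
    (x v : E) :
    g (x + v) ≤ g x + inner ℝ (g' x) v + L / 2 * ‖v‖ ^ 2 := by
  have hline : ∀ t : ℝ, HasDerivAt (fun s : ℝ => x + s • v) v t := fun t => by
    simpa using ((hasDerivAt_id t).smul_const v).const_add x
  have hg_line : ∀ t : ℝ, HasDerivAt (fun s : ℝ => g (x + s • v)) (inner ℝ (g' (x + t • v)) v) t :=
    fun t => by exact (hgrad (x + t • v)).hasFDerivAt.comp_hasDerivAt t (hline t)
  have hquad : ∀ t : ℝ,
      HasDerivAt (fun s : ℝ => g x + s * inner ℝ (g' x) v + L / 2 * s ^ 2 * ‖v‖ ^ 2)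
      (inner ℝ (g' x) v + L * t * ‖v‖ ^ 2) t := fun t => by
    have := (((hasDerivAt_id t).mul_const (inner ℝ (g' x) v)).const_add (g x)).add
      (((hasDerivAt_pow 2 t).const_mul (L / 2)).mul_const (‖v‖ ^ 2))
    exact this.congr_deriv (by push_cast; ring)
  have key := image_le_of_deriv_right_le_deriv_boundary (a := 0) (b := 1)
    (fun t _ => (hg_line t).continuousAt.continuousWithinAt)
    (fun t _ => (hg_line t).hasDerivWithinAt) (by simp)
    (fun t _ => (hquad t).continuousAt.continuousWithinAt)
    (fun t _ => (hquad t).hasDerivWithinAt)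
    (fun t ht => by
      have := inner_sub_le_mul_sq_of_lipschitz hlip x v ht.1
      rw [inner_sub_left] at this
      linarith)
    (right_mem_Icc.2 zero_le_one)
  simpa using key

theorem sub_le_sub_add_inner_add_sq_of_lipschitz_gradient [CompleteSpace E]
    {g h : E → ℝ} {g' : E → E} {L σ : ℝ} {x w : E}
    (hgrad : ∀ z, HasGradientAt g (g' z) z) (hlip : ∀ u v, ‖g' u - g' v‖ ≤ L * ‖u - v‖)
    (hh : ∀ z, h x + inner ℝ w (z - x) + σ / 2 * ‖z - x‖ ^ 2 ≤ h z) (d : E) (lam : ℝ) :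
    g (x + lam • d) - h (x + lam • d) ≤
      (g x - h x) + lam * inner ℝ (g' x - w) d + (L - σ) / 2 * lam ^ 2 * ‖d‖ ^ 2 := by
  have hg := le_add_inner_add_sq_of_lipschitz_gradient hgrad hlip x (lam • d)
  have hlower := hh (x + lam • d)
  rw [add_sub_cancel_left] at hlower
  simp only [inner_smul_right, inner_sub_left, norm_smul, mul_pow, Real.norm_eq_abs, sq_abs]
    at hg hlower ⊢
  linarith

end InnerProductSpace

theorem StrongConvexWith.add_inner_add_le_of_mem_subdiff_s14 {n : ℕ}
    {h : EuclideanSpace ℝ (Fin n) → ℝ} {σ : ℝ} (hsc : StrongConvexWith σ h)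
    {x w : EuclideanSpace ℝ (Fin n)} (hw : w ∈ subdiff h x) (z : EuclideanSpace ℝ (Fin n)) :
    h x + inner ℝ w (z - x) + σ / 2 * ‖z - x‖ ^ 2 ≤ h z := by
  set C := ‖z - x‖ ^ 2
  have hchord : ∀ t ∈ Ioo (0 : ℝ) 1, inner ℝ w (z - x) + σ / 2 * ((1 - t) * C) ≤ h z - h x := by
    rintro t ⟨ht0, ht1⟩
    have hupper := hsc z x t ht0 ht1
    have hlower := hw (t • z + (1 - t) • x)
    rw [show t • z + (1 - t) • x - x = t • (z - x) by module, inner_smul_right] at hlower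
    have : t * (inner ℝ w (z - x) + σ / 2 * ((1 - t) * C)) ≤ t * (h z - h x) := by
      linarith
    exact le_of_mul_le_mul_left this ht0
  have hlim : Tendsto (fun t : ℝ => inner ℝ w (z - x) + σ / 2 * ((1 - t) * C)) (𝓝[>] 0)
      (𝓝 (inner ℝ w (z - x) + σ / 2 * C)) :=
    ((by fun_prop : Continuous fun t : ℝ => inner ℝ w (z - x) + σ / 2 * ((1 - t) * C)).tendsto'
      0 _ (by simp)).mono_left nhdsWithin_le_nhds
  have := le_of_tendsto hlim (by filter_upwards [Ioo_mem_nhdsGT one_pos] using hchord)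
  linarith

theorem stmt14_general {n : ℕ} (g h : EuclideanSpace ℝ (Fin n) → ℝ)
    (g' : EuclideanSpace ℝ (Fin n) → EuclideanSpace ℝ (Fin n)) (L : ℝ)
    (hgrad : ∀ z, HasGradientAt g (g' z) z)
    (hlip : ∀ u v, ‖g' u - g' v‖ ≤ L * ‖u - v‖) :
    (∀ (x d : EuclideanSpace ℝ (Fin n)) (lam : ℝ), ∀ w ∈ subdiff h x,
      g (x + lam • d) - h (x + lam • d) ≤
        (g x - h x) + lam * (inner ℝ (g' x - w) d : ℝ) + L / 2 * lam ^ 2 * ‖d‖ ^ 2) ∧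
    (∀ σ : ℝ, 0 < σ → StrongConvexWith σ h →
      ∀ (x d : EuclideanSpace ℝ (Fin n)) (lam : ℝ), ∀ w ∈ subdiff h x,
        g (x + lam • d) - h (x + lam • d) ≤
          (g x - h x) + lam * (inner ℝ (g' x - w) d : ℝ) + (L - σ) / 2 * lam ^ 2 * ‖d‖ ^ 2) := by
  refine ⟨fun x d lam w hw => ?_, fun σ _ hsc x d lam w hw => ?_⟩
  · simpa using sub_le_sub_add_inner_add_sq_of_lipschitz_gradient (σ := 0) hgrad hlip
      (fun z => by simpa using hw z) d lam
  · exact sub_le_sub_add_inner_add_sq_of_lipschitz_gradient hgrad hlip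
      (hsc.add_inner_add_le_of_mem_subdiff_s14 hw) d lam

theorem stmt14 {n : ℕ} (g h : EuclideanSpace ℝ (Fin n) → ℝ)
    (g' : EuclideanSpace ℝ (Fin n) → EuclideanSpace ℝ (Fin n)) (L : ℝ) (hL : 0 < L)
    (hgrad : ∀ z, HasGradientAt g (g' z) z)
    (hlip : ∀ u v, ‖g' u - g' v‖ ≤ L * ‖u - v‖)
    (hhconv : ConvexOn ℝ Set.univ h) :
    (∀ (x d : EuclideanSpace ℝ (Fin n)) (lam : ℝ), ∀ w ∈ subdiff h x,
      g (x + lam • d) - h (x + lam • d) ≤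
        (g x - h x) + lam * (inner ℝ (g' x - w) d : ℝ) + L / 2 * lam ^ 2 * ‖d‖ ^ 2) ∧
    (∀ σ : ℝ, 0 < σ → StrongConvexWith σ h →
      ∀ (x d : EuclideanSpace ℝ (Fin n)) (lam : ℝ), ∀ w ∈ subdiff h x,
        g (x + lam • d) - h (x + lam • d) ≤
          (g x - h x) + lam * (inner ℝ (g' x - w) d : ℝ) + (L - σ) / 2 * lam ^ 2 * ‖d‖ ^ 2) :=
  stmt14_general g h g' L hgrad hlip
end
end

section
/- Let g, h : ℝⁿ → ℝ be strongly convex with modulus σ > 0, with g differentiable, let φ := g − h satisfy φ* := inf_{x∈ℝⁿ} φ(x) > −∞, and let ρ > 0. Let sequences (x^k), (y^k) in ℝⁿ, stepsizes t_k and parameters ν_k ≥ 0 satisfy, for every k: ∇g(y^k) ∈ ∂h(x^k), d^k := y^k − x^k, x^{k+1} = y^k + t_k d^k, t_k ≥ t_min for a fixed t_min > 0, and φ(x^{k+1}) ≤ φ(x^k) − (σ + ρ t_k²) ‖d^k‖² + ν_k. Let 0 < ς < 1 and k₀ ∈ ℕ be such that ν_k ≤ ς (σ + ρ t_min²) ‖d^k‖²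 for all k ≥ k₀. Then for every N ∈ ℕ with N > k₀: min{ ‖d^k‖ : k = 0, 1, …, N−1 } ≤ ( √( φ(x^0) − φ* + ∑_{k=0}^{k₀−1} ν_k ) / √( (1 − ς)(σ + ρ t_min²) ) ) · (1/√N). -/
open Set Filter Topology

noncomputable section

/-!
The descent inequality loses at least `c ‖dᵏ‖²`, with `c = (1 - ς)(σ + ρ t_min²)`, at every step,
up to the error `νₖ`, which only matters for `k < k₀`; afterwards it is absorbed by a fraction `ς`
of the decrease. Telescoping gives `c ∑_{k<N} ‖dᵏ‖² ≤ φ(x⁰) - φ* + ∑_{k<k₀} νₖ`, and the smallest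
of the `N` summands is at most their mean.
-/

namespace Finset

theorem sum_range_ite_lt_of_le {M : Type*} [AddCommMonoid M] (ν : ℕ → M) {k₀ N : ℕ}
    (h : k₀ ≤ N) : ∑ k ∈ range N, (if k < k₀ then ν k else 0) = ∑ k ∈ range k₀, ν k := by
  rw [← sum_filter]
  congr 1
  ext k
  simp only [mem_filter, mem_range]
  omega

theorem mul_sum_range_le_of_le_sub_succ {φ a e : ℕ → ℝ} {c : ℝ}
    (h : ∀ k, c * a k ≤ φ k - φ (k + 1) + e k) (N : ℕ) :
    c * ∑ k ∈ range N, a k ≤ φ 0 - φ N + ∑ k ∈ range N, e k := by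
  rw [mul_sum, ← sum_range_sub' φ, ← sum_add_distrib]
  exact sum_le_sum fun k _ => h k

theorem exists_lt_le_sqrt_div_of_mul_sum_sq_le {a : ℕ → ℝ} {c A : ℝ} {N : ℕ}
    (ha : ∀ k, 0 ≤ a k) (hc : 0 < c) (hN : 0 < N) (hsum : c * ∑ k ∈ range N, a k ^ 2 ≤ A) :
    ∃ k < N, a k ≤ Real.sqrt A / Real.sqrt c * (1 / Real.sqrt N) := by
  have hN' : (0 : ℝ) < N := Nat.cast_pos.mpr hN
  have hmean : ∑ k ∈ range N, a k ^ 2 = ∑ _k ∈ range N, (∑ k ∈ range N, a k ^ 2) / N := by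
    rw [sum_const, card_range, nsmul_eq_mul]
    field_simp
  obtain ⟨k, hk, hle⟩ := exists_le_of_sum_le (nonempty_range_iff.mpr hN.ne') hmean.le
  refine ⟨k, mem_range.mp hk, ?_⟩
  have hsq : a k ^ 2 ≤ A / (c * N) := by
    rw [le_div_iff₀ (by positivity), mul_comm c, ← mul_assoc]
    rw [le_div_iff₀ hN'] at hle
    nlinarith
  calc a k = Real.sqrt (a k ^ 2) := (Real.sqrt_sq (ha k)).symm
    _ ≤ Real.sqrt (A / (c * N)) := Real.sqrt_le_sqrt hsq
    _ = Real.sqrt A / Real.sqrt c * (1 / Real.sqrt N) := by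
      rw [Real.sqrt_div' A (by positivity), Real.sqrt_mul hc.le]
      ring

end Finset

theorem stmt18_general {n : ℕ} (g h : EuclideanSpace ℝ (Fin n) → ℝ) (σ ρ tmin : ℝ)
    (hσ : 0 < σ) (hρ : 0 < ρ) (htmin : 0 < tmin)
    (hbd : BddBelow (Set.range fun z => g z - h z))
    (x y : ℕ → EuclideanSpace ℝ (Fin n)) (t ν : ℕ → ℝ)
    (ht : ∀ k, tmin ≤ t k)
    (hdec : ∀ k, g (x (k + 1)) - h (x (k + 1)) ≤
      (g (x k) - h (x k)) - (σ + ρ * t k ^ 2) * ‖y k - x k‖ ^ 2 + ν k)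
    (ς : ℝ) (hς0 : 0 < ς) (hς1 : ς < 1) (k₀ : ℕ)
    (hνk : ∀ k ≥ k₀, ν k ≤ ς * (σ + ρ * tmin ^ 2) * ‖y k - x k‖ ^ 2) :
    ∀ N : ℕ, k₀ < N → ∃ k < N, ‖y k - x k‖ ≤
      Real.sqrt ((g (x 0) - h (x 0)) - (⨅ z, (g z - h z)) + ∑ k ∈ Finset.range k₀, ν k) /
        Real.sqrt ((1 - ς) * (σ + ρ * tmin ^ 2)) * (1 / Real.sqrt N) := by
  intro N hN
  have hweight : ∀ k, (σ + ρ * tmin ^ 2) * ‖y k - x k‖ ^ 2 ≤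
      (σ + ρ * t k ^ 2) * ‖y k - x k‖ ^ 2 := fun k => by
    gcongr
    exact ht k
  set B := σ + ρ * tmin ^ 2
  have hB : 0 < B := by positivity
  have hc : 0 < (1 - ς) * B := mul_pos (by linarith) hB
  have hstep_loss : ∀ k, (1 - ς) * B * ‖y k - x k‖ ^ 2 ≤ (g (x k) - h (x k)) -
      (g (x (k + 1)) - h (x (k + 1))) + if k < k₀ then ν k else 0 := fun k => by
    have := hdec k
    have := hweight k
    split_ifs with hk
    · linarith [mul_nonneg hς0.le (mul_nonneg hB.le (sq_nonneg ‖y k - x k‖))]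
    · linarith [hνk k (not_lt.mp hk)]
  have hsum := Finset.mul_sum_range_le_of_le_sub_succ hstep_loss N
  rw [Finset.sum_range_ite_lt_of_le ν hN.le] at hsum
  have hinf : (⨅ z, (g z - h z)) ≤ g (x N) - h (x N) := ciInf_le hbd (x N)
  exact Finset.exists_lt_le_sqrt_div_of_mul_sum_sq_le (fun k => norm_nonneg _) hc
    (Nat.zero_lt_of_lt hN) (by linarith)

theorem stmt18 {n : ℕ} (g h : EuclideanSpace ℝ (Fin n) → ℝ)
    (g' : EuclideanSpace ℝ (Fin n) → EuclideanSpace ℝ (Fin n)) (σ ρ tmin : ℝ)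
    (hσ : 0 < σ) (hρ : 0 < ρ) (htmin : 0 < tmin)
    (hgs : StrongConvexWith σ g) (hhs : StrongConvexWith σ h)
    (hgrad : ∀ z, HasGradientAt g (g' z) z)
    (hbd : BddBelow (Set.range fun z => g z - h z))
    (x y : ℕ → EuclideanSpace ℝ (Fin n)) (t ν : ℕ → ℝ)
    (hν : ∀ k, 0 ≤ ν k) (ht : ∀ k, tmin ≤ t k)
    (hw : ∀ k, g' (y k) ∈ subdiff h (x k))
    (hstep : ∀ k, x (k + 1) = y k + t k • (y k - x k))
    (hdec : ∀ k, g (x (k + 1)) - h (x (k + 1)) ≤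
      (g (x k) - h (x k)) - (σ + ρ * t k ^ 2) * ‖y k - x k‖ ^ 2 + ν k)
    (ς : ℝ) (hς0 : 0 < ς) (hς1 : ς < 1) (k₀ : ℕ)
    (hνk : ∀ k ≥ k₀, ν k ≤ ς * (σ + ρ * tmin ^ 2) * ‖y k - x k‖ ^ 2) :
    ∀ N : ℕ, k₀ < N → ∃ k < N, ‖y k - x k‖ ≤
      Real.sqrt ((g (x 0) - h (x 0)) - (⨅ z, (g z - h z)) + ∑ k ∈ Finset.range k₀, ν k) /
        Real.sqrt ((1 - ς) * (σ + ρ * tmin ^ 2)) * (1 / Real.sqrt N) :=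
  stmt18_general g h σ ρ tmin hσ hρ htmin hbd x y t ν ht hdec ς hς0 hς1 k₀ hνk
end
end
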